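/- arXiv:2211.12866 — 5 statements merged into one kernel-verified Lean document; each statement's English description precedes it below -/
import Mathlib

section
/- Let a, b, c, n be integers such that gcd(a, b, c) = 1, gcd(2a, gcd(4b, c)) = 4, n is even, and 2a² + 4b² − c²·n = 36. Then b is odd and 4 divides a. -/
/-! From `gcd(2a, 4b, c) = 4` we get `a = 2a'` and `c = 4c'`, and the equation becomes
`2a'² + b² = 9 + 4c'²n`. Modulo 4 this forces `b` odd, so `b² ≡ 1`, so `2a'² ≡ 0` and `a'` is
even. -/

theorem Int.even_and_odd_of_two_mul_sq_add_sq_modEq_one {x y : ℤ}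
    (h : 2 * x ^ 2 + y ^ 2 ≡ 1 [ZMOD 4]) : Even x ∧ Odd y := by
  have hy : Odd y := by
    have hodd : Odd (2 * x ^ 2 + y ^ 2) := Int.odd_iff.mpr (h.of_dvd (by norm_num : (2 : ℤ) ∣ 4))
    have hy2 : Odd (y ^ 2) := (Int.odd_add'.mp hodd).mpr (even_two_mul _)
    exact (Int.odd_pow.mp hy2).resolve_right two_ne_zero
  have h2x : 2 * x ^ 2 ≡ 0 [ZMOD 4] :=
    Int.ModEq.add_right_cancel' (y ^ 2) <| by
      simpa using h.trans (Int.sq_mod_four_eq_one_of_odd hy).symm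
  have hx2 : 2 ∣ x ^ 2 := by
    have := Int.modEq_zero_iff_dvd.mp h2x
    omega
  exact ⟨(Int.even_pow' two_ne_zero).mp (even_iff_two_dvd.mpr hx2), hy⟩

theorem stmt_5_general (a b c n : ℤ)
    (h4 : Int.gcd (2 * a) (Int.gcd (4 * b) c) = 4)
    (heq : 2 * a ^ 2 + 4 * b ^ 2 - c ^ 2 * n = 36) :
    Odd b ∧ (4 : ℤ) ∣ a := by
  have h4_dvd : (4 : ℤ) ∣ Int.gcd (2 * a) (Int.gcd (4 * b) c) := by rw [h4]; rfl
  obtain ⟨a', rfl⟩ : (2 : ℤ) ∣ a := by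
    have := h4_dvd.trans (Int.gcd_dvd_left _ _)
    omega
  obtain ⟨c', rfl⟩ : (4 : ℤ) ∣ c :=
    h4_dvd.trans <| (Int.gcd_dvd_right _ _).trans (Int.gcd_dvd_right _ _)
  have hmod : 2 * a' ^ 2 + b ^ 2 ≡ 1 [ZMOD 4] :=
    (Int.modEq_iff_dvd.mpr ⟨2 + c' ^ 2 * n, by linarith⟩).symm
  obtain ⟨⟨j, rfl⟩, hb⟩ := Int.even_and_odd_of_two_mul_sq_add_sq_modEq_one hmod
  exact ⟨hb, j, by ring⟩

/-- If `gcd(a, b, c) = 1`, `gcd(2a, 4b, c) = 4`, `n` is even and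
`2a² + 4b² − c²·n = 36`, then `b` is odd and `4 ∣ a`. -/
theorem stmt_5 (a b c n : ℤ) (h1 : Int.gcd a (Int.gcd b c) = 1)
    (h4 : Int.gcd (2 * a) (Int.gcd (4 * b) c) = 4) (hn : Even n)
    (heq : 2 * a ^ 2 + 4 * b ^ 2 - c ^ 2 * n = 36) :
    Odd b ∧ (4 : ℤ) ∣ a :=
  stmt_5_general a b c n h4 heq
end

section
/- Let e₁,…,e₇ be a basis of the complex vector space ℂ⁷ and work in its exterior algebra. Let x = e₁∧e₄ + e₂∧e₅ + e₃∧e₆ ∈ ⋀²ℂ⁷. Then for a vector v ∈ ℂ⁷, one has v∧x∧x∧x = 0 if and only if v lies in the linear span of e₁,…,e₆. -/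
/-!
The bivector `x` is a sum of three commuting square-zero elements, so `x³ = 6 · e₁e₄e₂e₅e₃e₆`.
Every `eᵢ` with `i ≤ 6` is killed by this six-fold product, so `v x³ = 6 c · e₇e₁e₄e₂e₅e₃e₆`
where `c` is the `e₇`-coordinate of `v`; the product of a basis is nonzero.
-/

open ExteriorAlgebra

theorem cube_add_add_eq_six_nsmul_of_mul_self_eq_zero {R : Type*} [Semiring R] {a b c : R}
    (ha : a * a = 0) (hb : b * b = 0) (hc : c * c = 0)
    (hab : Commute a b) (hac : Commute a c) (hbc : Commute b c) :
    (a + b + c) * (a + b + c) * (a + b + c) = 6 • (a * b * c) := by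
  have sq_left {x : R} (h : x * x = 0) (z : R) : x * (x * z) = 0 := by
    rw [← mul_assoc, h, zero_mul]
  have swap_left {x y : R} (h : Commute x y) (z : R) : y * (x * z) = x * (y * z) :=
    (h.left_comm z).symm
  simp only [add_mul, mul_add, mul_assoc, ha, hb, hc, sq_left ha, sq_left hb,
    hab.eq.symm, hac.eq.symm, hbc.eq.symm, swap_left hab,
    mul_zero, add_zero, zero_add]
  abel

theorem Module.Basis.mem_span_image_compl_singleton_iff {ι R M : Type*} [Semiring R]
    [AddCommMonoid M] [Module R M] (b : Module.Basis ι R M) (i : ι) (v : M) :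
    v ∈ Submodule.span R (b '' {i}ᶜ) ↔ b.repr v i = 0 := by
  rw [b.mem_span_image, Set.subset_compl_singleton_iff, Finset.mem_coe,
    Finsupp.notMem_support_iff]

namespace ExteriorAlgebra

section CommRing

variable {R M : Type*} [CommRing R] [AddCommGroup M] [Module R M]

theorem ι_mul_ι_eq_neg (x y : M) : ι R x * ι R y = -(ι R y * ι R x) :=
  eq_neg_of_add_eq_zero_left (ι_add_mul_swap x y)

theorem commute_ι_ι_mul_ι (u p q : M) : Commute (ι R u) (ι R p * ι R q) :=
  calc ι R u * (ι R p * ι R q)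
      = -(ι R p * (ι R u * ι R q)) := by rw [← mul_assoc, ι_mul_ι_eq_neg u p, neg_mul, mul_assoc]
    _ = ι R p * ι R q * ι R u := by rw [ι_mul_ι_eq_neg u q, mul_neg, neg_neg, mul_assoc]

theorem commute_ι_mul_ι (p q r s : M) : Commute (ι R p * ι R q) (ι R r * ι R s) :=
  (commute_ι_ι_mul_ι p r s).mul_left (commute_ι_ι_mul_ι q r s)

theorem ι_mul_ι_mul_self (p q : M) : ι R p * ι R q * (ι R p * ι R q) = 0 := by
  rw [mul_assoc, (commute_ι_ι_mul_ι q p q).eq, ← mul_assoc (ι R p), ← mul_assoc (ι R p),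
    ι_sq_zero, zero_mul, zero_mul]

theorem ι_mul_ιMulti (u : M) {n : ℕ} (g : Fin n → M) :
    ι R u * ιMulti R n g = ιMulti R (n + 1) (Fin.cons u g) := by
  rw [ιMulti_succ_apply]
  rfl

theorem ι_mul_ιMulti_eq_zero_of_mem {n : ℕ} {g : Fin n → M} {u : M} (hu : u ∈ Set.range g) :
    ι R u * ιMulti R n g = 0 := by
  obtain ⟨i, rfl⟩ := hu
  exact ι_mul_prod_list g i

end CommRing

section Field

variable {K V : Type*} [Field K] [AddCommGroup V] [Module K V]

theorem ιMulti_ne_zero_of_linearIndependent {n : ℕ} {g : Fin n → V}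
    (hg : LinearIndependent K g) : ιMulti K n g ≠ 0 := by
  intro h
  -- `g` itself is the member of the family of `n`-fold products indexed by all of `Fin n`.
  refine (exteriorPower.ιMulti_family_linearIndependent_field n hg).ne_zero
    (Set.powersetCard.ofFinEmbEquiv (RelEmbedding.refl _)) (Subtype.ext ?_)
  simpa [ιMulti_family] using h

theorem ι_mul_eq_zero_iff_repr_eq_zero {I : Type*} [Fintype I] (b : Module.Basis I K V) (i₀ : I)
    {w : ExteriorAlgebra K V} (hw : ∀ i ≠ i₀, ι K (b i) * w = 0) (hw₀ : ι K (b i₀) * w ≠ 0)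
    (v : V) : ι K v * w = 0 ↔ b.repr v i₀ = 0 := by
  have hv : ι K v * w = b.repr v i₀ • (ι K (b i₀) * w) := by
    conv_lhs => rw [← b.sum_repr v]
    rw [map_sum, Finset.sum_mul, Finset.sum_eq_single i₀ (fun i _ hi => by
      rw [map_smul, smul_mul_assoc, hw i hi, smul_zero]) (by simp), map_smul, smul_mul_assoc]
  rw [hv, smul_eq_zero, or_iff_left hw₀]

end Field

end ExteriorAlgebra

/-- For a basis `e₁,…,e₇` of `ℂ⁷` and `x = e₁∧e₄ + e₂∧e₅ + e₃∧e₆ ∈ ⋀²ℂ⁷`, a vector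
`v ∈ ℂ⁷` satisfies `v∧x∧x∧x = 0` if and only if `v` lies in the span of `e₁,…,e₆`. -/
theorem stmt_8 (b : Module.Basis (Fin 7) ℂ (Fin 7 → ℂ)) (v : Fin 7 → ℂ) :
    let e : Fin 7 → ExteriorAlgebra ℂ (Fin 7 → ℂ) := fun i => ι ℂ (b i)
    let x : ExteriorAlgebra ℂ (Fin 7 → ℂ) := e 0 * e 3 + e 1 * e 4 + e 2 * e 5
    (ι ℂ v * x * x * x = 0 ↔
      v ∈ Submodule.span ℂ ({b 0, b 1, b 2, b 3, b 4, b 5} : Set (Fin 7 → ℂ))) := by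
  intro e x
  let f : Fin 6 → Fin 7 := ![0, 3, 1, 4, 2, 5]
  have hw : e 0 * e 3 * (e 1 * e 4) * (e 2 * e 5) = ιMulti ℂ 6 (b ∘ f) := by
    simp only [ιMulti_apply, List.ofFn_succ, List.ofFn_zero, List.prod_cons, List.prod_nil,
      mul_one, mul_assoc]
    rfl
  have hx : x * x * x = 6 • ιMulti ℂ 6 (b ∘ f) := by
    rw [cube_add_add_eq_six_nsmul_of_mul_self_eq_zero (ι_mul_ι_mul_self _ _)
      (ι_mul_ι_mul_self _ _) (ι_mul_ι_mul_self _ _) (commute_ι_mul_ι _ _ _ _)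
      (commute_ι_mul_ι _ _ _ _) (commute_ι_mul_ι _ _ _ _), hw]
  have hspan : ({b 0, b 1, b 2, b 3, b 4, b 5} : Set (Fin 7 → ℂ)) = b '' {6}ᶜ := by
    rw [show ({6}ᶜ : Set (Fin 7)) = {0, 1, 2, 3, 4, 5} by ext i; fin_cases i <;> simp]
    simp only [Set.image_insert_eq, Set.image_singleton]
  have hf : ∀ i ≠ 6, i ∈ Set.range f := by decide
  have hf₀ : Function.Injective (Fin.cons 6 f : Fin 7 → Fin 7) := by decide
  rw [mul_assoc, mul_assoc, ← mul_assoc x, hx, mul_smul_comm, ← Nat.cast_smul_eq_nsmul ℂ,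
    smul_eq_zero, or_iff_right (by norm_num), hspan, b.mem_span_image_compl_singleton_iff]
  refine ι_mul_eq_zero_iff_repr_eq_zero b 6 (fun i hi => ?_) ?_ v
  · obtain ⟨j, rfl⟩ := hf i hi
    exact ι_mul_ιMulti_eq_zero_of_mem ⟨j, rfl⟩
  · rw [ι_mul_ιMulti, ← Fin.comp_cons]
    exact ιMulti_ne_zero_of_linearIndependent (b.linearIndependent.comp _ hf₀)
end

section
/- Equip ℤ⁴ with the symmetric bilinear form B((r,x,y,s),(r',x',y',s')) = 18·x·x' + 2·(x·y' + x'·y) − r·s' − r'·s. Let w = (3,−1,0,3), u₁ = (1,0,0,−1) and u₂ = (1,0,−3,1). Then B(w,u₁) = B(w,u₂) = B(u₁,u₂) = 0, B(u₁,u₁) = 2, B(u₂,u₂) = −2, and the orthogonal complement {z ∈ ℤ⁴ : B(z,w) = 0} equals the ℤ-span of {w, u₁, u₂}. Consequently the quotient w^⊥/ℤw is a rank-two lattice isometric to ⟨2⟩ ⊕ ⟨−2⟩. -/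
/-- The Mukai-type pairing `B((r,x,y,s),(r',x',y',s')) = 18xx' + 2(xy' + x'y) − rs' − r's`
on `ℤ⁴`, with `(r,x,y,s) = (z 0, z 1, z 2, z 3)`. -/
def mukaiB (z z' : Fin 4 → ℤ) : ℤ :=
  18 * z 1 * z' 1 + 2 * (z 1 * z' 2 + z' 1 * z 2) - z 0 * z' 3 - z' 0 * z 3

/-- With `w = (3,−1,0,3)`, `u₁ = (1,0,0,−1)`, `u₂ = (1,0,−3,1)`: the stated pairings hold,
the orthogonal complement of `w` is the span of `{w, u₁, u₂}`, and `w, u₁, u₂` are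
linearly independent over `ℤ` (so that `w^⊥/ℤw` is a rank-two lattice isometric to
`⟨2⟩ ⊕ ⟨−2⟩`, with basis the classes of `u₁` and `u₂`). -/
theorem stmt_11 :
    let w : Fin 4 → ℤ := ![3, -1, 0, 3]
    let u₁ : Fin 4 → ℤ := ![1, 0, 0, -1]
    let u₂ : Fin 4 → ℤ := ![1, 0, -3, 1]
    mukaiB w u₁ = 0 ∧ mukaiB w u₂ = 0 ∧ mukaiB u₁ u₂ = 0 ∧
    mukaiB u₁ u₁ = 2 ∧ mukaiB u₂ u₂ = -2 ∧
    (∀ z : Fin 4 → ℤ, mukaiB z w = 0 ↔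
      z ∈ Submodule.span ℤ ({w, u₁, u₂} : Set (Fin 4 → ℤ))) ∧
    (∀ m p q : ℤ, m • w + p • u₁ + q • u₂ = 0 → m = 0 ∧ p = 0 ∧ q = 0) := by
  intro w u₁ u₂
  refine ⟨by decide, by decide, by decide, by decide, by decide, ?_, ?_⟩
  · intro z
    constructor
    · intro h
      simp only [mukaiB, w, Matrix.cons_val_zero, Matrix.cons_val_one, Matrix.head_cons,
        Matrix.cons_val_two, Matrix.tail_cons, Matrix.cons_val_three] at h
      obtain ⟨q', hq⟩ : (3:ℤ) ∣ z 2 := by omega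
      obtain ⟨p', hp⟩ : (2:ℤ) ∣ z 0 - z 3 := by omega
      have hz : z = (-(z 1)) • w + p' • u₁ + (-q') • u₂ := by
        funext i
        fin_cases i <;>
          simp [w, u₁, u₂, Pi.add_apply, Pi.smul_apply, smul_eq_mul] <;> omega
      rw [hz]
      have hw : w ∈ Submodule.span ℤ ({w, u₁, u₂} : Set (Fin 4 → ℤ)) :=
        Submodule.subset_span (by simp)
      have h1 : u₁ ∈ Submodule.span ℤ ({w, u₁, u₂} : Set (Fin 4 → ℤ)) :=
        Submodule.subset_span (by simp)
      have h2 : u₂ ∈ Submodule.span ℤ ({w, u₁, u₂} : Set (Fin 4 → ℤ)) :=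
        Submodule.subset_span (by simp)
      exact Submodule.add_mem _ (Submodule.add_mem _ (Submodule.smul_mem _ _ hw)
        (Submodule.smul_mem _ _ h1)) (Submodule.smul_mem _ _ h2)
    · intro h
      refine Submodule.span_induction ?_ ?_ ?_ ?_ h
      · intro x hx
        rcases hx with rfl | rfl | rfl
        · decide
        · decide
        · decide
      · simp [mukaiB]
      · intro a b _ _ ha hb
        simp only [mukaiB, Pi.add_apply] at *
        linear_combination ha + hb
      · intro c a _ ha
        simp only [mukaiB, Pi.smul_apply, smul_eq_mul] at *
        linear_combination c * ha
  · intro m p q h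
    have h0 := congrFun h 0
    have h1 := congrFun h 1
    have h2 := congrFun h 2
    simp [w, u₁, u₂, Pi.add_apply, Pi.smul_apply, smul_eq_mul] at h0 h1 h2
    omega
end

section
/- Let e₁,…,e₇ be a basis of ℂ⁷ and work in ⋀²ℂ⁷. Consider the set S consisting of the three bivectors e₂∧e₅, e₂∧e₇, e₁∧e₂ − e₅∧e₇, together with all bivectors x·(e₂∧e₆ − e₁∧e₅) − y·(e₂∧e₄ + e₁∧e₇) for (x,y) ∈ ℂ², and all bivectors y²·e₄∧e₇ − x²·e₆∧e₅ + x·y·(e₄∧e₅ − e₆∧e₇) for (x,y) ∈ ℂ². Then the ℂ-linear span of S in ⋀²ℂ⁷ has dimension exactly 8. -/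
/-!
Eight bivectors span the same space as `S`: `e₂∧e₅`, `e₂∧e₇`, `e₁∧e₂ − e₅∧e₇`, the values
`e₂∧e₆ − e₁∧e₅` and `e₂∧e₄ + e₁∧e₇` of the linear family at `(1,0)` and `(0,1)`, and the values
`e₄∧e₇`, `e₆∧e₅` and `e₄∧e₅ − e₆∧e₇` of the quadratic family recovered from `(0,1)`, `(1,0)`, `(1,1)`.
In the basis `{eᵢ∧eⱼ}` of `⋀²ℂ⁷` each of them has a coordinate that vanishes on the seven others,
so they are linearly independent.
-/

open Module ExteriorAlgebra

section Span
variable {R M : Type*} [CommRing R] [AddCommGroup M] [Module R M]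

theorem Submodule.span_range_smul_sub_smul (u v : M) :
    span R (Set.range fun p : R × R => p.1 • u - p.2 • v) = span R {u, v} := by
  apply le_antisymm <;> rw [span_le]
  · rintro _ ⟨p, rfl⟩
    exact sub_mem (smul_mem _ _ (subset_span (by simp))) (smul_mem _ _ (subset_span (by simp)))
  · set q : R × R → M := fun p => p.1 • u - p.2 • v
    have hmem (p : R × R) : q p ∈ span R (Set.range q) := subset_span ⟨p, rfl⟩
    simp only [Set.insert_subset_iff, Set.singleton_subset_iff]
    constructor
    · simpa [q] using hmem (1, 0)
    · simpa [q] using neg_mem (hmem (0, 1))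

theorem Submodule.span_range_quadratic (a c r : M) :
    span R (Set.range fun p : R × R => p.2 ^ 2 • a - p.1 ^ 2 • c + (p.1 * p.2) • r) =
      span R {a, c, r} := by
  apply le_antisymm <;> rw [span_le]
  · rintro _ ⟨p, rfl⟩
    exact add_mem (sub_mem (smul_mem _ _ (subset_span (by simp)))
      (smul_mem _ _ (subset_span (by simp)))) (smul_mem _ _ (subset_span (by simp)))
  · set q : R × R → M := fun p => p.2 ^ 2 • a - p.1 ^ 2 • c + (p.1 * p.2) • r
    have hmem (p : R × R) : q p ∈ span R (Set.range q) := subset_span ⟨p, rfl⟩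
    simp only [Set.insert_subset_iff, Set.singleton_subset_iff]
    refine ⟨?_, ?_, ?_⟩
    · simpa [q] using hmem (0, 1)
    · simpa [q] using neg_mem (hmem (1, 0))
    · have hr : q (1, 1) - q (0, 1) - q (1, 0) = r := by simp only [q]; module
      exact hr ▸ sub_mem (sub_mem (hmem (1, 1)) (hmem (0, 1))) (hmem (1, 0))

end Span

theorem LinearIndependent.of_pairwise_dual_eq_zero_ne_zero {K V ι : Type*} [Field K]
    [AddCommGroup V] [Module K V] (v : ι → V) (f : ι → Dual K V)
    (h0 : Pairwise fun i j ↦ f i (v j) = 0) (hne : ∀ i, f i (v i) ≠ 0) :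
    LinearIndependent K v :=
  .of_pairwise_dual_eq_zero_one v (fun i ↦ (f i (v i))⁻¹ • f i)
    (fun i j hij ↦ by simp [h0 hij]) (fun i ↦ by simp [hne i])

namespace ExteriorAlgebra
variable {R M I : Type*} [CommRing R] [AddCommGroup M] [Module R M] [LinearOrder I]
  (b : Basis I R M)

theorem ι_mul_ι_eq_basis_pair {i j : I} (h : i < j) :
    ι R (b i) * ι R (b j) = b.ExteriorAlgebra {i, j} := by
  have hcard : ({i, j} : Finset I).card = 2 := Finset.card_pair h.ne
  rw [basis_apply_ofCard b hcard, ιMulti_family, Set.powersetCard.ofFinEmbEquiv_symm_apply,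
    ιMulti_apply]
  have h0 := Finset.orderEmbOfFin_zero hcard two_pos
  have h1 := Finset.orderEmbOfFin_last hcard two_pos
  simp only [Fin.zero_eta, Fin.isValue, Finset.singleton_nonempty, Finset.min'_insert,
    Finset.min'_singleton, Nat.add_one_sub_one, Fin.mk_one, Finset.max'_insert,
    Finset.max'_singleton, Set.powersetCard.val_ofCard, Function.comp_apply, List.ofFn_succ,
    Fin.succ_zero_eq_one, List.ofFn_zero, List.prod_cons, List.prod_nil, mul_one] at h0 h1 ⊢
  simp [h0, h1, h.le]

end ExteriorAlgebra

/-- For a basis `e₁,…,e₇` of `ℂ⁷`, the set `S ⊂ ⋀²ℂ⁷` consisting of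
`e₂∧e₅`, `e₂∧e₇`, `e₁∧e₂ − e₅∧e₇`, all `x·(e₂∧e₆ − e₁∧e₅) − y·(e₂∧e₄ + e₁∧e₇)` and all
`y²·e₄∧e₇ − x²·e₆∧e₅ + xy·(e₄∧e₅ − e₆∧e₇)` for `(x,y) ∈ ℂ²`, spans a subspace of
dimension exactly `8`. (Indices are shifted: `eᵢ` of the statement is `e (i-1)`.) -/
theorem stmt_16 (b : Module.Basis (Fin 7) ℂ (Fin 7 → ℂ)) :
    let e : Fin 7 → ExteriorAlgebra ℂ (Fin 7 → ℂ) := fun i => ι ℂ (b i)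
    let S : Set (ExteriorAlgebra ℂ (Fin 7 → ℂ)) :=
      {e 1 * e 4, e 1 * e 6, e 0 * e 1 - e 4 * e 6} ∪
      (Set.range fun p : ℂ × ℂ =>
        p.1 • (e 1 * e 5 - e 0 * e 4) - p.2 • (e 1 * e 3 + e 0 * e 6)) ∪
      (Set.range fun p : ℂ × ℂ =>
        p.2 ^ 2 • (e 3 * e 6) - p.1 ^ 2 • (e 5 * e 4) +
          (p.1 * p.2) • (e 3 * e 4 - e 5 * e 6))
    Module.finrank ℂ (Submodule.span ℂ S) = 8 := by
  intro e S
  let w : Fin 8 → ExteriorAlgebra ℂ (Fin 7 → ℂ) :=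
    ![e 1 * e 4, e 1 * e 6, e 0 * e 1 - e 4 * e 6, e 1 * e 5 - e 0 * e 4,
      e 1 * e 3 + e 0 * e 6, e 3 * e 6, e 5 * e 4, e 3 * e 4 - e 5 * e 6]
  have hspan : Submodule.span ℂ S = Submodule.span ℂ (Set.range w) := by
    rw [Submodule.span_union, Submodule.span_union, Submodule.span_range_smul_sub_smul,
      Submodule.span_range_quadratic, ← Submodule.span_union, ← Submodule.span_union]
    congr 1
    simp only [w, Matrix.range_cons, Matrix.range_empty, Set.union_empty, Set.singleton_union,
      Set.insert_union]
  set B := b.ExteriorAlgebra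
  have hwB : w = ![B {1, 4}, B {1, 6}, B {0, 1} - B {4, 6}, B {1, 5} - B {0, 4},
      B {1, 3} + B {0, 6}, B {3, 6}, -B {4, 5}, B {3, 4} - B {5, 6}] := by
    have h54 : e 5 * e 4 = -(e 4 * e 5) := eq_neg_of_add_eq_zero_left (ι_add_mul_swap _ _)
    simp only [w, h54]
    simp [e, B, ι_mul_ι_eq_basis_pair]
  have hw : LinearIndependent ℂ w := by
    let pair : Fin 8 → Finset (Fin 7) :=
      ![{1, 4}, {1, 6}, {0, 1}, {1, 5}, {1, 3}, {3, 6}, {4, 5}, {3, 4}]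
    rw [hwB]
    refine .of_pairwise_dual_eq_zero_ne_zero _ (fun k => B.coord (pair k)) ?_ ?_
    · intro k l hkl
      fin_cases k <;> fin_cases l <;> simp +decide [pair, B] at hkl ⊢
    · intro k
      fin_cases k <;> simp +decide [pair, B]
  rw [hspan, finrank_span_eq_card hw, Fintype.card_fin]
end

section
/- Let e₀,…,e₆ be a basis of ℂ⁷ with dual basis v₀,…,v₆, let B be the symmetric bilinear form with B(e₀,e₀) = 1, B(e₁,e₂) = B(e₃,e₄) = B(e₅,e₆) = 1/2 and all other pairings of basis vectors zero (the polar form of Q = v₀² + v₁v₂ + v₃v₄ + v₅v₆), and let ω = v₀∧v₁∧v₂ + v₀∧v₃∧v₄ + v₀∧v₅∧v₆ + v₁∧v₃∧v₅ + v₂∧v₄∧v₆. Call a 2-dimensional subspace P ⊂ ℂ⁷ isotropic if B vanishes identically on P, and a null-plane if moreover ω(u, v, z) = 0 for all u, v ∈ P and z ∈ ℂ⁷. Let D be the diagonal endomorphism with D e₀ = 0, D e₁ = s·e₁, D e₂ = −s·e₂, D e₃ = t·e₃, D e₄ = −t·e₄, D e₅ = −(s+t)·e₅, D e₆ = (s+t)·e₆,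 where s, t ∈ ℂ satisfy s, t, s+t, s−t, 2s+t, s+2t all nonzero. Then there are exactly 12 isotropic planes P with D(P) ⊆ P, and exactly 6 of them are null-planes. -/
/-!
The six conditions on `s, t` say exactly that the seven weights `d i` are pairwise distinct, so
`D` is diagonal with simple spectrum. Then `∏_{j ≠ i} (D - d j)` is a nonzero multiple of the
projection onto `e i`, hence every `D`-stable subspace is a coordinate subspace, and the
`D`-stable planes are the `span {e i, e j}`. Such a plane is isotropic iff `e j` is not
`B`-paired with `e i` (so `i, j ≠ 0` and `j` is not the index of the opposite weight), and it is a
null-plane iff no term of `ω` involves both `v i` and `v j`. Counting index pairs gives `12` and `6`.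
-/

/-- The polar bilinear form of `Q = v₀² + v₁v₂ + v₃v₄ + v₅v₆` on `ℂ⁷`:
`B(e₀,e₀) = 1`, `B(e₁,e₂) = B(e₃,e₄) = B(e₅,e₆) = 1/2`, all other pairings zero. -/
noncomputable def polarB (x y : Fin 7 → ℂ) : ℂ :=
  x 0 * y 0 + (1 / 2) * (x 1 * y 2 + x 2 * y 1 + x 3 * y 4 + x 4 * y 3 +
    x 5 * y 6 + x 6 * y 5)

/-- The evaluation of the decomposable 3-form `v_i∧v_j∧v_k` on `(x, y, z)`. -/
def wedge3 (i j k : Fin 7) (x y z : Fin 7 → ℂ) : ℂ :=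
  Matrix.det !![x i, x j, x k; y i, y j, y k; z i, z j, z k]

/-- The three-form `ω = v₀∧v₁∧v₂ + v₀∧v₃∧v₄ + v₀∧v₅∧v₆ + v₁∧v₃∧v₅ + v₂∧v₄∧v₆`. -/
def omega7 (x y z : Fin 7 → ℂ) : ℂ :=
  wedge3 0 1 2 x y z + wedge3 0 3 4 x y z + wedge3 0 5 6 x y z +
    wedge3 1 3 5 x y z + wedge3 2 4 6 x y z

open Submodule Module Function

theorem LinearMap.forall_mem_span_apply_eq_zero_iff {R M N P : Type*} [CommSemiring R]
    [AddCommMonoid M] [AddCommMonoid N] [AddCommMonoid P] [Module R M] [Module R N] [Module R P]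
    (B : M →ₗ[R] N →ₗ[R] P) {s : Set M} {t : Set N} :
    (∀ u ∈ span R s, ∀ v ∈ span R t, B u v = 0) ↔ ∀ x ∈ s, ∀ y ∈ t, B x y = 0 := by
  refine ⟨fun h x hx y hy => h x (subset_span hx) y (subset_span hy), fun h u hu v hv => ?_⟩
  have hleft : ∀ x ∈ s, v ∈ LinearMap.ker (B x) := fun x hx =>
    span_le.mpr (fun y hy => h x hx y hy) hv
  exact span_le.mpr (show s ⊆ LinearMap.ker (B.flip v) from hleft) hu

section CoordinateSubspaces

variable {K ι : Type*} [Field K] [DecidableEq ι]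

variable (K) in
def coordSpan (S : Finset ι) : Submodule K (ι → K) :=
  span K ((fun i => Pi.single i 1) '' S)

theorem forall_mem_coordSpan_apply_eq_zero_iff (B : (ι → K) →ₗ[K] (ι → K) →ₗ[K] K)
    (S : Finset ι) :
    (∀ u ∈ coordSpan K S, ∀ v ∈ coordSpan K S, B u v = 0) ↔
      ∀ i ∈ S, ∀ j ∈ S, B (Pi.single i 1) (Pi.single j 1) = 0 := by
  simp only [coordSpan, LinearMap.forall_mem_span_apply_eq_zero_iff, Set.forall_mem_image,
    Finset.mem_coe]

theorem finrank_coordSpan (S : Finset ι) : finrank K (coordSpan K S) = S.card := by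
  have hli : LinearIndependent K fun i : S => (Pi.single (i : ι) (1 : K) : ι → K) :=
    (Pi.linearIndependent_single_one ι K).comp _ Subtype.val_injective
  have hrange : Set.range (fun i : S => (Pi.single (i : ι) (1 : K) : ι → K)) =
      (fun i => Pi.single i 1) '' S := by
    ext; simp
  rw [coordSpan, ← hrange, finrank_span_eq_card hli, Fintype.card_coe]

variable [Fintype ι]

theorem mem_coordSpan {S : Finset ι} {u : ι → K} : u ∈ coordSpan K S ↔ ∀ i ∉ S, u i = 0 := by
  constructor
  · intro hu
    have hle : coordSpan K S ≤ Submodule.pi (↑S)ᶜ fun _ => ⊥ := by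
      rw [coordSpan, span_le]
      rintro _ ⟨j, hj, rfl⟩ i hi
      have hij : i ≠ j := fun h => hi (h ▸ hj)
      simp [hij]
    simpa using hle hu
  · intro hu
    rw [← Finset.univ_sum_single u]
    refine sum_mem fun i _ => ?_
    by_cases hi : i ∈ S
    · rw [show Pi.single i (u i) = u i • Pi.single i (1 : K) by
        rw [← Pi.single_smul', smul_eq_mul, mul_one]]
      exact smul_mem _ _ (subset_span ⟨i, hi, rfl⟩)
    · simp [hu i hi]

theorem single_one_mem_coordSpan {S : Finset ι} {i : ι} :
    Pi.single i (1 : K) ∈ coordSpan K S ↔ i ∈ S := by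
  rw [mem_coordSpan]
  constructor
  · intro h
    by_contra hi
    simpa using h i hi
  · intro hi j hj
    simp [show j ≠ i from fun h => hj (h ▸ hi)]

theorem coordSpan_injective : Injective (coordSpan K : Finset ι → Submodule K (ι → K)) := by
  intro S T h
  ext i
  rw [← single_one_mem_coordSpan (K := K), h, single_one_mem_coordSpan]

theorem coordSpan_diag_invariant (d : ι → K) (S : Finset ι) :
    ∀ u ∈ coordSpan K S, (fun i => d i * u i) ∈ coordSpan K S := by
  simp only [mem_coordSpan]
  intro u hu i hi
  simp [hu i hi]

theorem single_apply_mem_of_diag_invariant {d : ι → K} (hd : Injective d)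
    {P : Submodule K (ι → K)} (hP : ∀ u ∈ P, (fun i => d i * u i) ∈ P)
    {u : ι → K} (hu : u ∈ P) (i : ι) : Pi.single i (u i) ∈ P := by
  have hprod : ∀ F : Finset ι, (fun k => (∏ j ∈ F, (d k - d j)) * u k) ∈ P := by
    intro F
    induction F using Finset.induction_on with
    | empty => simpa using hu
    | insert a F ha ih =>
      convert P.sub_mem (hP _ ih) (P.smul_mem (d a) ih) using 1
      funext k
      simp only [Finset.prod_insert ha, Pi.sub_apply, Pi.smul_apply, smul_eq_mul]
      ring
  have hc : ∏ j ∈ Finset.univ.erase i, (d i - d j) ≠ 0 :=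
    Finset.prod_ne_zero_iff.mpr fun j hj =>
      sub_ne_zero.mpr fun h => (Finset.ne_of_mem_erase hj) (hd h).symm
  have hlagrange : (fun k => (∏ j ∈ Finset.univ.erase i, (d k - d j)) * u k) =
      (∏ j ∈ Finset.univ.erase i, (d i - d j)) • Pi.single i (u i) := by
    funext k
    by_cases hk : k = i
    · subst hk; simp
    · rw [Finset.prod_eq_zero (Finset.mem_erase.mpr ⟨hk, Finset.mem_univ k⟩) (sub_self _)]
      simp [hk]
  have := P.smul_mem (∏ j ∈ Finset.univ.erase i, (d i - d j))⁻¹ (hlagrange ▸ hprod _)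
  rwa [inv_smul_smul₀ hc] at this

theorem exists_eq_coordSpan_of_diag_invariant {d : ι → K} (hd : Injective d)
    {P : Submodule K (ι → K)} (hP : ∀ u ∈ P, (fun i => d i * u i) ∈ P) :
    ∃ S, P = coordSpan K S := by
  classical
  refine ⟨Finset.univ.filter fun i => Pi.single i (1 : K) ∈ P, le_antisymm ?_ ?_⟩
  · intro u hu
    rw [mem_coordSpan]
    intro i hi
    by_contra hui
    have := P.smul_mem (u i)⁻¹ (single_apply_mem_of_diag_invariant hd hP hu i)
    rw [← Pi.single_smul', smul_eq_mul, inv_mul_cancel₀ hui] at this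
    exact hi (by simpa using this)
  · rw [coordSpan, span_le]
    rintro _ ⟨i, hi, rfl⟩
    simpa using hi

theorem ncard_setOf_diag_invariant {d : ι → K} (hd : Injective d)
    (Φ : Submodule K (ι → K) → Prop) :
    {P | Φ P ∧ ∀ u ∈ P, (fun i => d i * u i) ∈ P}.ncard =
      {S : Finset ι | Φ (coordSpan K S)}.ncard := by
  have himage : {P | Φ P ∧ ∀ u ∈ P, (fun i => d i * u i) ∈ P} =
      coordSpan K '' {S : Finset ι | Φ (coordSpan K S)} := by
    ext P
    constructor
    · rintro ⟨hΦ, hP⟩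
      obtain ⟨S, rfl⟩ := exists_eq_coordSpan_of_diag_invariant hd hP
      exact ⟨S, hΦ, rfl⟩
    · rintro ⟨S, hS, rfl⟩
      exact ⟨hS, coordSpan_diag_invariant d S⟩
  rw [himage, Set.ncard_image_of_injective _ coordSpan_injective]

end CoordinateSubspaces

noncomputable def polarBilin : (Fin 7 → ℂ) →ₗ[ℂ] (Fin 7 → ℂ) →ₗ[ℂ] ℂ :=
  LinearMap.mk₂ ℂ polarB
    (fun _ _ _ => by simp only [polarB, Pi.add_apply]; ring)
    (fun _ _ _ => by simp only [polarB, Pi.smul_apply, smul_eq_mul]; ring)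
    (fun _ _ _ => by simp only [polarB, Pi.add_apply]; ring)
    (fun _ _ _ => by simp only [polarB, Pi.smul_apply, smul_eq_mul]; ring)

theorem wedge3_apply (i j k : Fin 7) (x y z : Fin 7 → ℂ) :
    wedge3 i j k x y z = x i * y j * z k - x i * y k * z j - x j * y i * z k +
      x j * y k * z i + x k * y i * z j - x k * y j * z i := by
  simp [wedge3, Matrix.det_fin_three]

def omegaBilin (z : Fin 7 → ℂ) : (Fin 7 → ℂ) →ₗ[ℂ] (Fin 7 → ℂ) →ₗ[ℂ] ℂ :=
  LinearMap.mk₂ ℂ (fun u v => omega7 u v z)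
    (fun _ _ _ => by simp only [omega7, wedge3_apply, Pi.add_apply]; ring)
    (fun _ _ _ => by simp only [omega7, wedge3_apply, Pi.smul_apply, smul_eq_mul]; ring)
    (fun _ _ _ => by simp only [omega7, wedge3_apply, Pi.add_apply]; ring)
    (fun _ _ _ => by simp only [omega7, wedge3_apply, Pi.smul_apply, smul_eq_mul]; ring)

def oppIdx : Fin 7 → Fin 7 := ![0, 2, 1, 4, 3, 6, 5]

-- the index triples of the five terms of `omega7`
def omegaLines : Finset (Finset (Fin 7)) :=
  {{0, 1, 2}, {0, 3, 4}, {0, 5, 6}, {1, 3, 5}, {2, 4, 6}}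

theorem polarB_single_single_eq_zero_iff (i j : Fin 7) :
    polarB (Pi.single i 1) (Pi.single j 1) = 0 ↔ j ≠ oppIdx i := by
  fin_cases i <;> fin_cases j <;> simp [polarB, oppIdx]

theorem omega7_single_single_eq_zero_iff (i j : Fin 7) :
    (∀ z, omega7 (Pi.single i 1) (Pi.single j 1) z = 0) ↔
      ∀ L ∈ omegaLines, i ∈ L → j ∈ L → i = j := by
  -- when `i, j` lie on a line `{i, j, k}`, `omega7 (e i) (e j)` is `± v k`, which is nonzero at `1`
  fin_cases i <;> fin_cases j <;> simp [omega7, wedge3_apply, omegaLines] <;>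
    exact ⟨1, one_ne_zero⟩

theorem isotropic_coordSpan_iff (S : Finset (Fin 7)) :
    (∀ u ∈ coordSpan ℂ S, ∀ v ∈ coordSpan ℂ S, polarB u v = 0) ↔
      ∀ i ∈ S, ∀ j ∈ S, j ≠ oppIdx i := by
  simp only [← polarB_single_single_eq_zero_iff]
  exact forall_mem_coordSpan_apply_eq_zero_iff polarBilin S

theorem null_coordSpan_iff (S : Finset (Fin 7)) :
    (∀ u ∈ coordSpan ℂ S, ∀ v ∈ coordSpan ℂ S, ∀ z, omega7 u v z = 0) ↔
      ∀ i ∈ S, ∀ j ∈ S, ∀ L ∈ omegaLines, i ∈ L → j ∈ L → i = j := by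
  simp only [← omega7_single_single_eq_zero_iff]
  constructor
  · intro h i hi j hj z
    exact (forall_mem_coordSpan_apply_eq_zero_iff (omegaBilin z) S).mp
      (fun u hu v hv => h u hu v hv z) i hi j hj
  · intro h u hu v hv z
    exact (forall_mem_coordSpan_apply_eq_zero_iff (omegaBilin z) S).mpr
      (fun i hi j hj => h i hi j hj z) u hu v hv

theorem ncard_isotropic_pairs :
    {S : Finset (Fin 7) | S.card = 2 ∧ ∀ i ∈ S, ∀ j ∈ S, j ≠ oppIdx i}.ncard = 12 := by
  rw [← Finset.coe_filter_univ, Set.ncard_coe_finset]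
  decide +kernel

theorem ncard_null_pairs :
    {S : Finset (Fin 7) | S.card = 2 ∧ (∀ i ∈ S, ∀ j ∈ S, j ≠ oppIdx i) ∧
      ∀ i ∈ S, ∀ j ∈ S, ∀ L ∈ omegaLines, i ∈ L → j ∈ L → i = j}.ncard = 6 := by
  rw [← Finset.coe_filter_univ, Set.ncard_coe_finset]
  decide +kernel

theorem weights_injective {s t : ℂ} (hs : s ≠ 0) (ht : t ≠ 0) (hst : s + t ≠ 0)
    (hst' : s - t ≠ 0) (h2st : 2 * s + t ≠ 0) (hs2t : s + 2 * t ≠ 0) :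
    Injective ![0, s, -s, t, -t, -(s + t), s + t] := by
  intro a b h
  fin_cases a <;> fin_cases b <;> simp at h ⊢ <;> grind

/-- For the diagonal endomorphism `D = diag(0, s, −s, t, −t, −(s+t), s+t)` with
`s, t, s+t, s−t, 2s+t, s+2t` all nonzero, there are exactly `12` isotropic planes
`P ⊂ ℂ⁷` with `D(P) ⊆ P`, and exactly `6` of them are null-planes. -/
theorem stmt_17 (s t : ℂ) (hs : s ≠ 0) (ht : t ≠ 0) (hst : s + t ≠ 0)
    (hst' : s - t ≠ 0) (h2st : 2 * s + t ≠ 0) (hs2t : s + 2 * t ≠ 0) :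
    let d : Fin 7 → ℂ := ![0, s, -s, t, -t, -(s + t), s + t]
    {P : Submodule ℂ (Fin 7 → ℂ) | Module.finrank ℂ P = 2 ∧
      (∀ u ∈ P, ∀ v ∈ P, polarB u v = 0) ∧
      (∀ u ∈ P, (fun i => d i * u i) ∈ P)}.ncard = 12 ∧
    {P : Submodule ℂ (Fin 7 → ℂ) | Module.finrank ℂ P = 2 ∧
      (∀ u ∈ P, ∀ v ∈ P, polarB u v = 0) ∧
      (∀ u ∈ P, ∀ v ∈ P, ∀ z : Fin 7 → ℂ, omega7 u v z = 0) ∧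
      (∀ u ∈ P, (fun i => d i * u i) ∈ P)}.ncard = 6 := by
  intro d
  have hd : Injective d := weights_injective hs ht hst hst' h2st hs2t
  constructor
  · have h := ncard_setOf_diag_invariant hd fun P =>
      finrank ℂ P = 2 ∧ ∀ u ∈ P, ∀ v ∈ P, polarB u v = 0
    simp only [and_assoc, finrank_coordSpan, isotropic_coordSpan_iff] at h
    rw [h, ncard_isotropic_pairs]
  · have h := ncard_setOf_diag_invariant hd fun P =>
      finrank ℂ P = 2 ∧ (∀ u ∈ P, ∀ v ∈ P, polarB u v = 0) ∧
        ∀ u ∈ P, ∀ v ∈ P, ∀ z : Fin 7 → ℂ, omega7 u v z = 0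
    simp only [and_assoc, finrank_coordSpan, isotropic_coordSpan_iff, null_coordSpan_iff] at h
    rw [h, ncard_null_pairs]
end
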